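/- A ring R is semi-boolean (i.e., R/J(R) is Boolean and idempotents lift modulo J(R)) if and only if R is potent and R/J(R) is UUSC. -/

import Mathlib

/-- An element `a` of a ring is *uniquely strongly clean* if there is exactly one
idempotent `e` such that `a - e` is a unit and `a * e = e * a`. -/
def IsUSCleanElem {R : Type*} [Ring R] (a : R) : Prop :=
  ∃! e : R, IsIdempotentElem e ∧ IsUnit (a - e) ∧ a * e = e * a

/-- An element `a` of a ring is *uniquely clean* if there is exactly one
idempotent `e` such that `a - e` is a unit. -/
def IsUCleanElem {R : Type*} [Ring R] (a : R) : Prop :=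
  ∃! e : R, IsIdempotentElem e ∧ IsUnit (a - e)

/-- An element `a` of a ring is *clean* if it is the sum of an idempotent and a unit. -/
def IsCleanElem {R : Type*} [Ring R] (a : R) : Prop :=
  ∃ e : R, IsIdempotentElem e ∧ IsUnit (a - e)

/-- A ring is *CUSC* if every clean element is uniquely strongly clean. -/
def IsCUSC (R : Type*) [Ring R] : Prop := ∀ a : R, IsCleanElem a → IsUSCleanElem a

/-- A ring is *UUSC* if every unit is uniquely strongly clean. -/
def IsUUSC (R : Type*) [Ring R] : Prop := ∀ a : R, IsUnit a → IsUSCleanElem a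

/-- A ring is *CUC* if every clean element is uniquely clean. -/
def IsCUC (R : Type*) [Ring R] : Prop := ∀ a : R, IsCleanElem a → IsUCleanElem a

/-- A ring is *UUC* if every unit is uniquely clean. -/
def IsUUC (R : Type*) [Ring R] : Prop := ∀ a : R, IsUnit a → IsUCleanElem a

/-- A ring is *USC* if every element is uniquely strongly clean. -/
def IsUSCRing (R : Type*) [Ring R] : Prop := ∀ a : R, IsUSCleanElem a

/-- A ring is *uniquely clean* (UC) if every element is uniquely clean. -/
def IsUCRing (R : Type*) [Ring R] : Prop := ∀ a : R, IsUCleanElem a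

/-- A ring is *clean* if every element is clean. -/
def IsCleanRing (R : Type*) [Ring R] : Prop := ∀ a : R, IsCleanElem a

/-- The Jacobson radical of a (possibly noncommutative) ring, as a two-sided ideal. -/
abbrev jacobsonRad (R : Type*) [Ring R] : TwoSidedIdeal R := TwoSidedIdeal.jacobson ⊥

/-- The quotient ring `R / J(R)` of a ring by its Jacobson radical. -/
abbrev JacQuot (R : Type*) [Ring R] := (jacobsonRad R).ringCon.Quotient

/-- A ring is *semi-potent* if every one-sided (left or right) ideal not contained in the
Jacobson radical contains a nonzero idempotent.  Left ideals are `Ideal R`, right ideals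
are `Rᵐᵒᵖ`-submodules of `R`. -/
def Semipotent (R : Type*) [Ring R] : Prop :=
  (∀ I : Ideal R, ¬ (I : Set R) ⊆ (jacobsonRad R : Set R) →
      ∃ e ∈ I, e ≠ 0 ∧ IsIdempotentElem e) ∧
  (∀ I : Submodule Rᵐᵒᵖ R, ¬ (I : Set R) ⊆ (jacobsonRad R : Set R) →
      ∃ e ∈ I, e ≠ 0 ∧ IsIdempotentElem e)

/-- Idempotents lift modulo the Jacobson radical: for every `a` with `a - a ^ 2 ∈ J(R)`
there is an idempotent `e` with `a - e ∈ J(R)`. -/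
def IdempotentsLiftJac (R : Type*) [Ring R] : Prop :=
  ∀ a : R, a - a ^ 2 ∈ jacobsonRad R → ∃ e : R, IsIdempotentElem e ∧ a - e ∈ jacobsonRad R

/-- A ring is *potent* if it is semi-potent and idempotents lift modulo the Jacobson radical. -/
def Potent (R : Type*) [Ring R] : Prop := Semipotent R ∧ IdempotentsLiftJac R

/-!
In `S = R/J(R)`, semipotency of `R` gives every `s ≠ 0` a right multiple `s x` that is a nonzero
idempotent, while UUSC forbids a nonzero idempotent `g` commuting with a unit `v` such that
`v - g` is also a unit. If `n ≠ 0 = n²`, the idempotent `g = n x` yields a copy of the matrix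
units of `M₂` in which `X² - X - 1` has a root, contradicting UUSC; so `S` is reduced and its
idempotents are central. If `a ≠ a²`, the central idempotent `e = (a - a²) x` is nonzero, yet
`e a` and `e a - e` are units of the corner `e S`, as their product `e (a² - a)` is: again a
contradiction. Conversely, a Boolean ring is UUSC since its only unit is `1`, and an idempotent
lift `f` of `a ∉ J(R)` is conjugate under the unit `1 + (a - f)` to idempotents in `R a` and `a R`.
-/

section Ring

variable {S : Type*} [Ring S]

theorem IsIdempotentElem.commute_of_isReduced [IsReduced S] {e : S} (he : IsIdempotentElem e)
    (r : S) : Commute e r := by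
  have h1 : e * r * (1 - e) = 0 := IsReduced.eq_zero _ ⟨2, by
    rw [sq, mul_assoc, ← mul_assoc (1 - e), ← mul_assoc (1 - e), he.one_sub_mul_self]
    simp⟩
  have h2 : (1 - e) * r * e = 0 := IsReduced.eq_zero _ ⟨2, by
    rw [sq, mul_assoc, ← mul_assoc e, ← mul_assoc e, he.mul_one_sub_self]
    simp⟩
  have h1' : e * r = e * r * e := by rw [mul_sub, mul_one, sub_eq_zero] at h1; exact h1
  have h2' : r * e = e * r * e := by rw [sub_mul, sub_mul, one_mul, sub_eq_zero] at h2; exact h2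
  exact h1'.trans h2'.symm

instance IsReduced.isDedekindFiniteMonoid [IsReduced S] : IsDedekindFiniteMonoid S where
  mul_eq_one_symm {a b} hab := by
    have hf : IsIdempotentElem (b * a) := by
      rw [IsIdempotentElem, mul_assoc, ← mul_assoc a, hab, one_mul]
    have hfa : b * a * a = a := by
      rw [(hf.commute_of_isReduced a).eq, ← mul_assoc, hab, one_mul]
    rw [← mul_one (b * a), ← hab, ← mul_assoc, hfa, hab]

/-- For a central idempotent `e`, the map `r ↦ e r + (1 - e)` is `r ↦ (e r, 1)` under
`S ≅ eS × (1 - e)S`. -/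
def IsIdempotentElem.centralMonoidHom {e : S} (he : IsIdempotentElem e)
    (hc : ∀ r, Commute e r) : S →* S where
  toFun r := e * r + (1 - e)
  map_one' := by simp
  map_mul' r s := by
    have h : e * r * (1 - e) = 0 := by
      rw [(hc r).eq, mul_assoc, he.mul_one_sub_self, mul_zero]
    simp only [mul_add, add_mul, ← mul_assoc, he.one_sub_mul_self, (he.one_sub).eq, h]
    rw [mul_assoc e r e, ← (hc r).eq, ← mul_assoc, he.eq]
    simp

theorem IsIdempotentElem.centralMonoidHom_apply {e : S} (he : IsIdempotentElem e)
    (hc : ∀ r, Commute e r) (r : S) : he.centralMonoidHom hc r = e * r + (1 - e) := rfl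

end Ring

section UUSC

variable {S : Type*} [Ring S]

theorem isUUSC_of_forall_isIdempotentElem (h : ∀ a : S, IsIdempotentElem a) : IsUUSC S := by
  intro a ha
  have unit_eq_one {u : S} (hu : IsUnit u) : u = 1 :=
    (IsIdempotentElem.iff_eq_one_of_isUnit hu).1 (h u)
  refine ⟨0, ⟨.zero, by simpa using ha, by simp⟩, fun e ⟨_, he, _⟩ => ?_⟩
  rw [unit_eq_one ha] at he
  simpa using unit_eq_one he

namespace IsUUSC

theorem eq_zero_of_isUnit_mul_sub (h : IsUUSC S) {v g : S} (hg : IsIdempotentElem g)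
    (hvg : Commute v g) (hu : IsUnit (v * (v - g))) : g = 0 := by
  obtain ⟨hv, hvsub⟩ := ((Commute.refl v).sub_right hvg).isUnit_mul_iff.1 hu
  exact (h v hv).unique ⟨hg, hvsub, hvg.eq⟩ ⟨.zero, by simpa using hv, by simp⟩

/-- `u` and `t` behave like the matrix units `E₁₂` and `E₂₁`; then `w = E₁₂ + E₂₁ + E₂₂` is a
root of `X² - X - 1` in the corner `G S G`, `G = E₁₁ + E₂₂`, so `w` and `w - 1` are units there. -/
theorem eq_zero_of_matrixUnits (h : IsUUSC S) {u t : S} (hu : u * u = 0) (ht : t * t = 0)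
    (hutu : u * t * u = u) (htut : t * u * t = t) : u = 0 := by
  set G := u * t + t * u
  set w := u + t + t * u
  have hu' (x : S) : u * (u * x) = 0 := by rw [← mul_assoc, hu, zero_mul]
  have ht' (x : S) : t * (t * x) = 0 := by rw [← mul_assoc, ht, zero_mul]
  rw [mul_assoc] at hutu htut
  obtain ⟨hG, hGw, hwG, hww, hGu⟩ : IsIdempotentElem G ∧ G * w = w ∧ w * G = w ∧
      w * w = w + G ∧ G * u = u := by
    refine ⟨?_, ?_, ?_, ?_, ?_⟩ <;>
    simp only [IsIdempotentElem, G, w, mul_add, add_mul, mul_assoc, hu, ht, hu', ht', hutu, htut,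
      mul_zero, add_zero, zero_add] <;>
    abel
  have hG0 : G = 0 := by
    refine h.eq_zero_of_isUnit_mul_sub (v := w + (1 - G)) hG ?_ ?_
    · simp only [Commute, SemiconjBy, add_mul, mul_add, mul_sub, sub_mul, hGw, hwG, hG.eq, mul_one,
        one_mul]
    · convert isUnit_one (M := S) using 1
      simp only [add_mul, mul_add, mul_sub, sub_mul, hGw, hwG, hG.eq, hww, mul_one, one_mul]
      abel
  rwa [hG0, zero_mul, eq_comm] at hGu

theorem isReduced (h : IsUUSC S)
    (hS : ∀ s : S, s ≠ 0 → ∃ x, IsIdempotentElem (s * x) ∧ s * x ≠ 0) : IsReduced S := by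
  refine (isReduced_iff_pow_one_lt 2 one_lt_two).2 fun n hn => ?_
  by_contra hn0
  obtain ⟨x, hg, hg0⟩ := hS n hn0
  set g := n * x
  have hng (y : S) : n * (g * y) = 0 := by
    rw [← mul_assoc, ← mul_assoc, ← sq, hn, zero_mul, zero_mul]
  have hnx (y : S) : n * (x * y) = g * y := (mul_assoc n x y).symm
  have hgg (y : S) : g * (g * y) = g * y := by rw [← mul_assoc, hg.eq]
  have hgn : g * n = 0 := by
    refine h.eq_zero_of_matrixUnits (t := (1 - g) * x * g) ?_ ?_ ?_ ?_ <;>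
    simp only [mul_sub, sub_mul, one_mul, mul_assoc, hng, hnx, hgg, hg.eq, mul_zero,
      sub_zero, sub_self]
  refine hg0 ?_
  calc g = g * (n * x) := hg.eq.symm
    _ = 0 := by rw [← mul_assoc, hgn, zero_mul]

theorem isIdempotentElem [IsReduced S] (h : IsUUSC S)
    (hS : ∀ s : S, s ≠ 0 → ∃ x, IsIdempotentElem (s * x) ∧ s * x ≠ 0) (a : S) :
    IsIdempotentElem a := by
  by_contra ha
  obtain ⟨x, he, he0⟩ := hS (a - a * a) (sub_ne_zero.2 (Ne.symm ha))
  set e := (a - a * a) * x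
  have hc := he.commute_of_isReduced
  set φ := he.centralMonoidHom hc
  refine he0 (h.eq_zero_of_isUnit_mul_sub he (v := φ a) (hc _).symm (.of_mul_eq_one (φ (-x)) ?_))
  have hsub : φ a - e = φ (a - 1) := by
    simp only [φ, IsIdempotentElem.centralMonoidHom_apply, mul_sub, mul_one]
    abel
  have hprod : a * (a - 1) * -x = (a - a * a) * x := by noncomm_ring
  rw [hsub, ← map_mul, ← map_mul, hprod, IsIdempotentElem.centralMonoidHom_apply, he.eq,
    add_sub_cancel]

end IsUUSC

end UUSC

section Jacobson

variable {R : Type*} [Ring R]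

theorem exists_mul_one_add_eq_one_of_mem_jacobsonRad {j : R} (hj : j ∈ jacobsonRad R) :
    ∃ z, z * (1 + j) = 1 := by
  obtain ⟨z, hz⟩ := TwoSidedIdeal.mem_jacobson_iff.1 hj 1
  rw [TwoSidedIdeal.mem_bot, mul_one, sub_eq_zero] at hz
  exact ⟨z, by rw [mul_add, mul_one, add_comm, hz]⟩

theorem isUnit_one_add_of_mem_jacobsonRad {j : R} (hj : j ∈ jacobsonRad R) : IsUnit (1 + j) := by
  obtain ⟨z, hz⟩ := exists_mul_one_add_eq_one_of_mem_jacobsonRad hj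
  have hzj : z = 1 + -(z * j) := by rw [← hz]; noncomm_ring
  obtain ⟨w, hw⟩ := exists_mul_one_add_eq_one_of_mem_jacobsonRad
    ((jacobsonRad R).neg_mem ((jacobsonRad R).mul_mem_left z j hj))
  rw [← hzj] at hw
  have hwj : w = 1 + j :=
    calc w = w * (z * (1 + j)) := by rw [hz, mul_one]
      _ = 1 + j := by rw [← mul_assoc, hw, one_mul]
  exact isUnit_iff_exists_and_exists.2 ⟨⟨z, hwj ▸ hw⟩, ⟨z, hz⟩⟩

theorem IsIdempotentElem.eq_zero_of_mem_jacobsonRad {e : R} (he : IsIdempotentElem e)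
    (hj : e ∈ jacobsonRad R) : e = 0 := by
  refine (isUnit_one_add_of_mem_jacobsonRad ((jacobsonRad R).neg_mem hj)).mul_left_eq_zero.1 ?_
  rw [← sub_eq_add_neg, he.mul_one_sub_self]

theorem jacobsonRad_mk'_eq_zero_iff {a : R} :
    (jacobsonRad R).ringCon.mk' a = 0 ↔ a ∈ jacobsonRad R :=
  ((jacobsonRad R).ringCon.eq).trans ((jacobsonRad R).mem_iff a).symm

theorem sub_sq_mem_jacobsonRad {a : R} (ha : IsIdempotentElem ((jacobsonRad R).ringCon.mk' a)) :
    a - a ^ 2 ∈ jacobsonRad R := by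
  rw [← jacobsonRad_mk'_eq_zero_iff, map_sub, map_pow, sq, ha.eq, sub_self]

theorem exists_units_mul_eq_of_sub_mem_jacobsonRad {a f : R} (hf : IsIdempotentElem f)
    (haf : a - f ∈ jacobsonRad R) : ∃ u : Rˣ, f * u = f * a ∧ u * f = a * f := by
  refine ⟨(isUnit_one_add_of_mem_jacobsonRad haf).unit, ?_, ?_⟩ <;>
  simp [mul_add, add_mul, mul_sub, sub_mul, hf.eq]

end Jacobson

section Semipotent

variable {R : Type*} [Ring R]

theorem IsIdempotentElem.units_conj {f : R} (hf : IsIdempotentElem f) (u : Rˣ) :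
    IsIdempotentElem (↑u * f * ↑u⁻¹) := by
  simp only [IsIdempotentElem, mul_assoc, Units.inv_mul_cancel_left]
  rw [← mul_assoc f, hf.eq]

theorem semipotent_of_forall_isIdempotentElem
    (hbool : ∀ a : JacQuot R, IsIdempotentElem a) (hlift : IdempotentsLiftJac R) :
    Semipotent R := by
  have key {a : R} (ha : a ∉ jacobsonRad R) : ∃ f : R, ∃ u : Rˣ,
      IsIdempotentElem f ∧ f ≠ 0 ∧ f * u = f * a ∧ u * f = a * f := by
    obtain ⟨f, hf, haf⟩ := hlift a (sub_sq_mem_jacobsonRad (hbool _))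
    obtain ⟨u, hfu, huf⟩ := exists_units_mul_eq_of_sub_mem_jacobsonRad hf haf
    refine ⟨f, u, hf, ?_, hfu, huf⟩
    rintro rfl
    exact ha (by simpa using haf)
  constructor
  · intro I hI
    obtain ⟨a, haI, ha⟩ := Set.not_subset.1 hI
    obtain ⟨f, u, hf, hf0, hfu, -⟩ := key ha
    refine ⟨↑u⁻¹ * f * u, ?_, ?_, by simpa using hf.units_conj u⁻¹⟩
    · rw [mul_assoc, hfu, ← mul_assoc]
      exact I.mul_mem_left _ haI
    · simpa [mul_assoc] using hf0
  · intro I hI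
    obtain ⟨a, haI, ha⟩ := Set.not_subset.1 hI
    obtain ⟨f, u, hf, hf0, -, huf⟩ := key ha
    refine ⟨↑u * f * ↑u⁻¹, ?_, ?_, hf.units_conj u⟩
    · rw [huf, mul_assoc, ← op_smul_eq_mul]
      exact I.smul_mem _ haI
    · simpa [mul_assoc] using hf0

theorem Semipotent.exists_isIdempotentElem_mul_ne_zero (hR : Semipotent R) {s : JacQuot R}
    (hs : s ≠ 0) : ∃ x, IsIdempotentElem (s * x) ∧ s * x ≠ 0 := by
  set π := (jacobsonRad R).ringCon.mk'
  obtain ⟨a, rfl⟩ := (jacobsonRad R).ringCon.mk'_surjective s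
  have ha : a ∉ jacobsonRad R := fun h => hs (jacobsonRad_mk'_eq_zero_iff.2 h)
  obtain ⟨e, he, he0, hidem⟩ := hR.2 (Submodule.span Rᵐᵒᵖ {a})
    fun hsub => ha (hsub (Submodule.mem_span_singleton_self a))
  obtain ⟨c, rfl⟩ := Submodule.mem_span_singleton.1 he
  rw [MulOpposite.smul_eq_mul_unop] at he0 hidem
  refine ⟨π c.unop, ?_, ?_⟩ <;> rw [← map_mul]
  · exact hidem.map π
  · exact fun h => he0 (hidem.eq_zero_of_mem_jacobsonRad (jacobsonRad_mk'_eq_zero_iff.1 h))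

end Semipotent

/-- Corollary 3.9: `R` is semi-boolean (i.e. `R/J(R)` is Boolean and idempotents lift
modulo `J(R)`) iff `R` is potent and `R/J(R)` is UUSC. -/
theorem stmt_17 (R : Type*) [Ring R] :
    ((∀ a : JacQuot R, IsIdempotentElem a) ∧ IdempotentsLiftJac R) ↔
      (Potent R ∧ IsUUSC (JacQuot R)) := by
  constructor
  · rintro ⟨hbool, hlift⟩
    exact ⟨⟨semipotent_of_forall_isIdempotentElem hbool hlift, hlift⟩,
      isUUSC_of_forall_isIdempotentElem hbool⟩
  · rintro ⟨⟨hsp, hlift⟩, huusc⟩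
    have hS (s : JacQuot R) (hs : s ≠ 0) := hsp.exists_isIdempotentElem_mul_ne_zero hs
    have := huusc.isReduced hS
    exact ⟨huusc.isIdempotentElem hS, hlift⟩
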